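/- Under the same thermodynamic assumptions (ρ, e, S C^∞ on (0,∞)², ρ > 0, T dS = de + P d(1/ρ), ∂ρ/∂P > 0, ∂ρ/∂T < 0, (∂e/∂T)(∂ρ/∂P) > (∂e/∂P)(∂ρ/∂T)), define ℛ := −ρ (∂S/∂P)/(∂ρ/∂P), K_P := −(1/ρ)∂ρ/∂T, and C_P := T ∂S/∂T. Then 0 < ℛ < C_P/(T K_P); equivalently T K_P ℛ / C_P = (∂S/∂P)(∂ρ/∂T)/[(∂ρ/∂P)(∂S/∂T)] ∈ (0,1). -/

import Mathlib

noncomputable section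

/-- Partial derivative with respect to the first variable (pressure `P`). -/
def pP (f : ℝ → ℝ → ℝ) (p t : ℝ) : ℝ := deriv (fun q => f q t) p

/-- Partial derivative with respect to the second variable (temperature `T`). -/
def pT (f : ℝ → ℝ → ℝ) (p t : ℝ) : ℝ := deriv (fun τ => f p τ) t

/-- The positive quadrant `(0,∞)²` (variables `(P,T)`). -/
def dom : Set (ℝ × ℝ) := Set.Ioi 0 ×ˢ Set.Ioi 0

open Set Filter Topology ContinuousLinearMap

lemma isOpen_dom' : IsOpen dom := isOpen_Ioi.prod isOpen_Ioi

-- slice lemmas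
lemma hasDerivAt_sliceP (f : ℝ → ℝ → ℝ) {p t : ℝ}
    (h : DifferentiableAt ℝ (fun z : ℝ × ℝ => f z.1 z.2) (p, t)) :
    HasDerivAt (fun q => f q t) (fderiv ℝ (fun z : ℝ × ℝ => f z.1 z.2) (p, t) (1, 0)) p := by
  have hline : HasDerivAt (fun q : ℝ => ((q, t) : ℝ × ℝ)) ((1 : ℝ), (0 : ℝ)) p :=
    HasDerivAt.prodMk (hasDerivAt_id p) (hasDerivAt_const p t)
  exact h.hasFDerivAt.comp_hasDerivAt p hline

lemma hasDerivAt_sliceT (f : ℝ → ℝ → ℝ) {p t : ℝ}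
    (h : DifferentiableAt ℝ (fun z : ℝ × ℝ => f z.1 z.2) (p, t)) :
    HasDerivAt (fun τ => f p τ) (fderiv ℝ (fun z : ℝ × ℝ => f z.1 z.2) (p, t) (0, 1)) t := by
  have hline : HasDerivAt (fun τ : ℝ => ((p, τ) : ℝ × ℝ)) ((0 : ℝ), (1 : ℝ)) t :=
    HasDerivAt.prodMk (hasDerivAt_const t p) (hasDerivAt_id t)
  exact h.hasFDerivAt.comp_hasDerivAt t hline

lemma pP_eq (f : ℝ → ℝ → ℝ) {p t : ℝ}
    (h : DifferentiableAt ℝ (fun z : ℝ × ℝ => f z.1 z.2) (p, t)) :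
    pP f p t = fderiv ℝ (fun z : ℝ × ℝ => f z.1 z.2) (p, t) (1, 0) :=
  (hasDerivAt_sliceP f h).deriv

lemma pT_eq (f : ℝ → ℝ → ℝ) {p t : ℝ}
    (h : DifferentiableAt ℝ (fun z : ℝ × ℝ => f z.1 z.2) (p, t)) :
    pT f p t = fderiv ℝ (fun z : ℝ × ℝ => f z.1 z.2) (p, t) (0, 1) :=
  (hasDerivAt_sliceT f h).deriv

-- second derivative slice lemmas
lemma hasDerivAt_pP_T (f : ℝ → ℝ → ℝ)
    (hf : ContDiffOn ℝ (⊤ : ℕ∞) (fun z : ℝ × ℝ => f z.1 z.2) dom)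
    {p t : ℝ} (hp : 0 < p) (ht : 0 < t) :
    HasDerivAt (fun τ => pP f p τ)
      (fderiv ℝ (fderiv ℝ (fun z : ℝ × ℝ => f z.1 z.2)) (p, t) (0, 1) (1, 0)) t := by
  set F : ℝ × ℝ → ℝ := fun z => f z.1 z.2 with hF
  have hmem : ((p, t) : ℝ × ℝ) ∈ dom := ⟨hp, ht⟩
  have hFat : ∀ z ∈ dom, ContDiffAt ℝ (⊤ : ℕ∞) F z := fun z hz => hf.contDiffAt (isOpen_dom'.mem_nhds hz)
  have hG : DifferentiableAt ℝ (fderiv ℝ F) (p, t) :=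
    ((hFat _ hmem).fderiv_right (m := 1) (WithTop.coe_le_coe.mpr le_top)).differentiableAt one_ne_zero
  have step1 : HasFDerivAt (fun z => fderiv ℝ F z (1, 0))
      ((ContinuousLinearMap.apply ℝ ℝ ((1 : ℝ), (0 : ℝ))).comp (fderiv ℝ (fderiv ℝ F) (p, t)))
      (p, t) :=
    (ContinuousLinearMap.apply ℝ ℝ ((1 : ℝ), (0 : ℝ))).hasFDerivAt.comp (p, t) hG.hasFDerivAt
  have hline : HasDerivAt (fun τ : ℝ => ((p, τ) : ℝ × ℝ)) ((0 : ℝ), (1 : ℝ)) t :=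
    HasDerivAt.prodMk (hasDerivAt_const t p) (hasDerivAt_id t)
  have step2 : HasDerivAt (fun τ => fderiv ℝ F (p, τ) (1, 0))
      (fderiv ℝ (fderiv ℝ F) (p, t) (0, 1) (1, 0)) t := by
    have := step1.comp_hasDerivAt t hline
    simpa [Function.comp_def] using this
  apply step2.congr_of_eventuallyEq
  have hnhd : {τ : ℝ | ((p, τ) : ℝ × ℝ) ∈ dom} ∈ 𝓝 t := by
    have : Continuous (fun τ : ℝ => ((p, τ) : ℝ × ℝ)) := by continuity
    exact this.continuousAt.preimage_mem_nhds (isOpen_dom'.mem_nhds hmem)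
  filter_upwards [hnhd] with τ hτ
  exact pP_eq f ((hFat _ hτ).differentiableAt (by simp))

lemma hasDerivAt_pT_P (f : ℝ → ℝ → ℝ)
    (hf : ContDiffOn ℝ (⊤ : ℕ∞) (fun z : ℝ × ℝ => f z.1 z.2) dom)
    {p t : ℝ} (hp : 0 < p) (ht : 0 < t) :
    HasDerivAt (fun q => pT f q t)
      (fderiv ℝ (fderiv ℝ (fun z : ℝ × ℝ => f z.1 z.2)) (p, t) (1, 0) (0, 1)) p := by
  set F : ℝ × ℝ → ℝ := fun z => f z.1 z.2 with hF
  have hmem : ((p, t) : ℝ × ℝ) ∈ dom := ⟨hp, ht⟩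
  have hFat : ∀ z ∈ dom, ContDiffAt ℝ (⊤ : ℕ∞) F z := fun z hz => hf.contDiffAt (isOpen_dom'.mem_nhds hz)
  have hG : DifferentiableAt ℝ (fderiv ℝ F) (p, t) :=
    ((hFat _ hmem).fderiv_right (m := 1) (WithTop.coe_le_coe.mpr le_top)).differentiableAt one_ne_zero
  have step1 : HasFDerivAt (fun z => fderiv ℝ F z (0, 1))
      ((ContinuousLinearMap.apply ℝ ℝ ((0 : ℝ), (1 : ℝ))).comp (fderiv ℝ (fderiv ℝ F) (p, t)))
      (p, t) :=
    (ContinuousLinearMap.apply ℝ ℝ ((0 : ℝ), (1 : ℝ))).hasFDerivAt.comp (p, t) hG.hasFDerivAt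
  have hline : HasDerivAt (fun q : ℝ => ((q, t) : ℝ × ℝ)) ((1 : ℝ), (0 : ℝ)) p :=
    HasDerivAt.prodMk (hasDerivAt_id p) (hasDerivAt_const p t)
  have step2 : HasDerivAt (fun q => fderiv ℝ F (q, t) (0, 1))
      (fderiv ℝ (fderiv ℝ F) (p, t) (1, 0) (0, 1)) p := by
    have := step1.comp_hasDerivAt p hline
    simpa [Function.comp_def] using this
  apply step2.congr_of_eventuallyEq
  have hnhd : {q : ℝ | ((q, t) : ℝ × ℝ) ∈ dom} ∈ 𝓝 p := by
    have : Continuous (fun q : ℝ => ((q, t) : ℝ × ℝ)) := by continuity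
    exact this.continuousAt.preimage_mem_nhds (isOpen_dom'.mem_nhds hmem)
  filter_upwards [hnhd] with q hq
  exact pT_eq f ((hFat _ hq).differentiableAt (by simp))

-- Maxwell identity: pP S p t = pT ρ p t / (ρ p t)^2
lemma maxwell (ρ e S : ℝ → ℝ → ℝ)
    (hρ : ContDiffOn ℝ (⊤ : ℕ∞) (fun z : ℝ × ℝ => ρ z.1 z.2) dom)
    (he : ContDiffOn ℝ (⊤ : ℕ∞) (fun z : ℝ × ℝ => e z.1 z.2) dom)
    (hS : ContDiffOn ℝ (⊤ : ℕ∞) (fun z : ℝ × ℝ => S z.1 z.2) dom)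
    (hρpos : ∀ p t : ℝ, 0 < p → 0 < t → 0 < ρ p t)
    (hSP : ∀ p t : ℝ, 0 < p → 0 < t →
      t * pP S p t = pP e p t + p * pP (fun q τ => 1 / ρ q τ) p t)
    (hST : ∀ p t : ℝ, 0 < p → 0 < t →
      t * pT S p t = pT e p t + p * pT (fun q τ => 1 / ρ q τ) p t)
    {p t : ℝ} (hp : 0 < p) (ht : 0 < t) :
    pP S p t = pT ρ p t / (ρ p t) ^ 2 := by
  set V : ℝ → ℝ → ℝ := fun q τ => 1 / ρ q τ with hV
  have hVsm : ContDiffOn ℝ (⊤ : ℕ∞) (fun z : ℝ × ℝ => V z.1 z.2) dom := by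
    exact contDiffOn_const.div hρ (fun z hz => (hρpos z.1 z.2 hz.1 hz.2).ne')
  have hmem : ((p, t) : ℝ × ℝ) ∈ dom := ⟨hp, ht⟩
  have hsymm : ∀ (f : ℝ → ℝ → ℝ), ContDiffOn ℝ (⊤ : ℕ∞) (fun z : ℝ × ℝ => f z.1 z.2) dom →
      fderiv ℝ (fderiv ℝ (fun z : ℝ × ℝ => f z.1 z.2)) (p, t) (0, 1) (1, 0)
        = fderiv ℝ (fderiv ℝ (fun z : ℝ × ℝ => f z.1 z.2)) (p, t) (1, 0) (0, 1) := by
    intro f hf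
    exact (hf.contDiffAt (isOpen_dom'.mem_nhds hmem)).isSymmSndFDerivAt (by norm_num; exact WithTop.coe_le_coe.mpr le_top) _ _
  -- derivatives of first partials
  have hspA := hasDerivAt_pP_T S hS hp ht
  have hepA := hasDerivAt_pP_T e he hp ht
  have hvpA := hasDerivAt_pP_T V hVsm hp ht
  have hstA := hasDerivAt_pT_P S hS hp ht
  have hetA := hasDerivAt_pT_P e he hp ht
  have hvtA := hasDerivAt_pT_P V hVsm hp ht
  -- equation 1 differentiated in t
  have h1L : HasDerivAt (fun τ => τ * pP S p τ)
      (1 * pP S p t + t * fderiv ℝ (fderiv ℝ (fun z : ℝ × ℝ => S z.1 z.2)) (p, t) (0, 1) (1, 0))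
      t := (hasDerivAt_id t).mul hspA
  have h1R : HasDerivAt (fun τ => pP e p τ + p * pP V p τ)
      (fderiv ℝ (fderiv ℝ (fun z : ℝ × ℝ => e z.1 z.2)) (p, t) (0, 1) (1, 0)
        + p * fderiv ℝ (fderiv ℝ (fun z : ℝ × ℝ => V z.1 z.2)) (p, t) (0, 1) (1, 0))
      t := hepA.add (hvpA.const_mul p)
  have hev1 : (fun τ => pP e p τ + p * pP V p τ) =ᶠ[nhds t] (fun τ => τ * pP S p τ) := by
    filter_upwards [Ioi_mem_nhds ht] with τ hτ
    exact (hSP p τ hp hτ).symm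
  have heq1 := (h1L.congr_of_eventuallyEq hev1).unique h1R
  -- equation 2 differentiated in p
  have h2L : HasDerivAt (fun q => t * pT S q t)
      (t * fderiv ℝ (fderiv ℝ (fun z : ℝ × ℝ => S z.1 z.2)) (p, t) (1, 0) (0, 1))
      p := hstA.const_mul t
  have h2R : HasDerivAt (fun q => pT e q t + q * pT V q t)
      (fderiv ℝ (fderiv ℝ (fun z : ℝ × ℝ => e z.1 z.2)) (p, t) (1, 0) (0, 1)
        + (1 * pT V p t + p * fderiv ℝ (fderiv ℝ (fun z : ℝ × ℝ => V z.1 z.2)) (p, t) (1, 0) (0, 1)))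
      p := hetA.add ((hasDerivAt_id p).mul hvtA)
  have hev2 : (fun q => pT e q t + q * pT V q t) =ᶠ[nhds p] (fun q => t * pT S q t) := by
    filter_upwards [Ioi_mem_nhds hp] with q hq
    exact (hST q t hq ht).symm
  have heq2 := (h2L.congr_of_eventuallyEq hev2).unique h2R
  -- combine with symmetry
  rw [hsymm S hS, hsymm e he, hsymm V hVsm] at heq1
  have hkey : pP S p t = - pT V p t := by linarith
  -- compute pT V
  have hFat : ContDiffAt ℝ (⊤ : ℕ∞) (fun z : ℝ × ℝ => ρ z.1 z.2) (p, t) :=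
    hρ.contDiffAt (isOpen_dom'.mem_nhds hmem)
  have hslT : HasDerivAt (fun τ => ρ p τ) (pT ρ p t) t := by
    have hd : DifferentiableAt ℝ (fun τ => ρ p τ) t :=
      (hasDerivAt_sliceT ρ (hFat.differentiableAt (by simp))).differentiableAt
    exact hd.hasDerivAt
  have hVT : HasDerivAt (fun τ => 1 / ρ p τ)
      ((0 * ρ p t - 1 * pT ρ p t) / (ρ p t) ^ 2) t :=
    (hasDerivAt_const t (1 : ℝ)).div hslT (hρpos p t hp ht).ne'
  have hVTval : pT V p t = - pT ρ p t / (ρ p t) ^ 2 := by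
    have := hVT.deriv
    simp only [zero_mul, one_mul, zero_sub] at this
    simpa [pT, hV] using this
  rw [hkey, hVTval]
  ring

/-- `0 < ℛ < C_P/(T K_P)` for the generalized gas constant. -/
theorem statement16 (ρ e S : ℝ → ℝ → ℝ)
    (hρ : ContDiffOn ℝ (⊤ : ℕ∞) (fun z : ℝ × ℝ => ρ z.1 z.2) dom)
    (he : ContDiffOn ℝ (⊤ : ℕ∞) (fun z : ℝ × ℝ => e z.1 z.2) dom)
    (hS : ContDiffOn ℝ (⊤ : ℕ∞) (fun z : ℝ × ℝ => S z.1 z.2) dom)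
    (hρpos : ∀ p t : ℝ, 0 < p → 0 < t → 0 < ρ p t)
    (hSP : ∀ p t : ℝ, 0 < p → 0 < t →
      t * pP S p t = pP e p t + p * pP (fun q τ => 1 / ρ q τ) p t)
    (hST : ∀ p t : ℝ, 0 < p → 0 < t →
      t * pT S p t = pT e p t + p * pT (fun q τ => 1 / ρ q τ) p t)
    (hρP : ∀ p t : ℝ, 0 < p → 0 < t → 0 < pP ρ p t)
    (hρT : ∀ p t : ℝ, 0 < p → 0 < t → pT ρ p t < 0)
    (heρ : ∀ p t : ℝ, 0 < p → 0 < t →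
      pP e p t * pT ρ p t < pT e p t * pP ρ p t) :
    ∀ p t : ℝ, 0 < p → 0 < t →
      0 < -(ρ p t) * pP S p t / pP ρ p t ∧
      -(ρ p t) * pP S p t / pP ρ p t
        < (t * pT S p t) / (t * (-(ρ p t)⁻¹ * pT ρ p t)) := by
  intro p t hp ht
  have hmem : ((p, t) : ℝ × ℝ) ∈ dom := ⟨hp, ht⟩
  have hr := hρpos p t hp ht
  have hrP := hρP p t hp ht
  have hrT := hρT p t hp ht
  have hmax := maxwell ρ e S hρ he hS hρpos hSP hST hp ht
  have hFat : ContDiffAt ℝ (⊤ : ℕ∞) (fun z : ℝ × ℝ => ρ z.1 z.2) (p, t) :=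
    hρ.contDiffAt (isOpen_dom'.mem_nhds hmem)
  have hslT : HasDerivAt (fun τ => ρ p τ) (pT ρ p t) t :=
    ((hasDerivAt_sliceT ρ (hFat.differentiableAt (by simp))).differentiableAt).hasDerivAt
  have hslP : HasDerivAt (fun q => ρ q t) (pP ρ p t) p :=
    ((hasDerivAt_sliceP ρ (hFat.differentiableAt (by simp))).differentiableAt).hasDerivAt
  have hVT : pT (fun q τ => 1 / ρ q τ) p t = -pT ρ p t / (ρ p t) ^ 2 := by
    have h := ((hasDerivAt_const t (1 : ℝ)).div hslT hr.ne').deriv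
    simp only [zero_mul, one_mul, zero_sub] at h
    simpa [pT, Pi.div_def] using h
  have hVP : pP (fun q τ => 1 / ρ q τ) p t = -pP ρ p t / (ρ p t) ^ 2 := by
    have h := ((hasDerivAt_const p (1 : ℝ)).div hslP hr.ne').deriv
    simp only [zero_mul, one_mul, zero_sub] at h
    simpa [pP, Pi.div_def] using h
  have h1 := hSP p t hp ht
  have h2 := hST p t hp ht
  rw [hVP, hmax] at h1
  rw [hVT] at h2
  have hE := heρ p t hp ht
  have heP : pP e p t = t * (pT ρ p t / (ρ p t) ^ 2) + p * (pP ρ p t / (ρ p t) ^ 2) := by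
    have hx : p * (-pP ρ p t / ρ p t ^ 2) = -(p * (pP ρ p t / ρ p t ^ 2)) := by ring
    rw [hx] at h1
    linarith
  constructor
  · rw [hmax]
    have hnum : 0 < -(ρ p t) * (pT ρ p t / ρ p t ^ 2) := by
      have hneg : pT ρ p t / ρ p t ^ 2 < 0 := div_neg_of_neg_of_pos hrT (by positivity)
      nlinarith
    exact div_pos hnum hrP
  · have hdpos : 0 < t * (-(ρ p t)⁻¹ * pT ρ p t) := by
      have : 0 < -(ρ p t)⁻¹ * pT ρ p t :=
        mul_pos_of_neg_of_neg (neg_neg_of_pos (inv_pos.mpr hr)) hrT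
      exact mul_pos ht this
    rw [hmax, div_lt_div_iff₀ hrP hdpos, h2]
    have hLHS : -(ρ p t) * (pT ρ p t / ρ p t ^ 2) * (t * (-(ρ p t)⁻¹ * pT ρ p t))
        = t * (pT ρ p t) ^ 2 / (ρ p t) ^ 2 := by
      field_simp
    rw [hLHS]
    have hE' : (t * (pT ρ p t / (ρ p t) ^ 2) + p * (pP ρ p t / (ρ p t) ^ 2)) * pT ρ p t
        < pT e p t * pP ρ p t := by rw [← heP]; exact hE
    have hexp : (t * (pT ρ p t / (ρ p t) ^ 2) + p * (pP ρ p t / (ρ p t) ^ 2)) * pT ρ p t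
        = t * (pT ρ p t) ^ 2 / (ρ p t) ^ 2 + p * pP ρ p t * pT ρ p t / (ρ p t) ^ 2 := by
      field_simp
    rw [hexp] at hE'
    have hgoal : (pT e p t + p * (-pT ρ p t / ρ p t ^ 2)) * pP ρ p t
        = pT e p t * pP ρ p t - p * pP ρ p t * pT ρ p t / (ρ p t) ^ 2 := by
      field_simp; ring
    rw [hgoal]
    linarith
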